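/- For every 1 ≤ k ≤ n, the kth upper multiexponent of a primitive digraph D of order n satisfies F(D,k) ≤ (n-k)(n-1) + 1. -/

import Mathlib

/-- There is a walk of length `l` from `u` to `v` in the digraph with arc relation `A`. -/
def HasWalk {n : ℕ} (A : Fin n → Fin n → Prop) (u v : Fin n) (l : ℕ) : Prop :=
  ∃ f : ℕ → Fin n, f 0 = u ∧ f l = v ∧ ∀ i < l, A (f i) (f (i + 1))

/-- A digraph is primitive if for some `p > 0` every ordered pair of vertices is
joined by a walk of length exactly `p`. -/
def Primitive {n : ℕ} (A : Fin n → Fin n → Prop) : Prop :=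
  ∃ p, 0 < p ∧ ∀ u v : Fin n, HasWalk A u v p

/-- `f` is the vertex sequence of a walk of length `l` from `u` to `v` in `A`. -/
def IsWalkSeq {n : ℕ} (A : Fin n → Fin n → Prop) (f : ℕ → Fin n) (u v : Fin n) (l : ℕ) : Prop :=
  f 0 = u ∧ f l = v ∧ ∀ i < l, A (f i) (f (i + 1))

/-- The sign of (the length-`l` initial part of) the walk with vertex sequence `f`
in the signed digraph `S`. -/
def walkSign {n : ℕ} (S : Fin n → Fin n → ℤ) (f : ℕ → Fin n) (l : ℕ) : ℤ :=
  ∏ i ∈ Finset.range l, S (f i) (f (i + 1))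

/-- The underlying digraph of a signed digraph `S`. -/
def Underlying {n : ℕ} (S : Fin n → Fin n → ℤ) : Fin n → Fin n → Prop :=
  fun u v => S u v ≠ 0

/-- All entries of `S` are in `{0, 1, -1}`: `S` is a sign pattern / signed digraph. -/
def SignPattern {n : ℕ} (S : Fin n → Fin n → ℤ) : Prop :=
  ∀ u v, S u v = 0 ∨ S u v = 1 ∨ S u v = -1

/-- There is a pair of SSSD walks of length `l` from `u` to `v`: two walks with the
same endpoints and length but different signs. -/
def HasSSSD {n : ℕ} (S : Fin n → Fin n → ℤ) (u v : Fin n) (l : ℕ) : Prop :=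
  ∃ f g : ℕ → Fin n, IsWalkSeq (Underlying S) f u v l ∧ IsWalkSeq (Underlying S) g u v l ∧
    walkSign S f l ≠ walkSign S g l

/-- A signed digraph is non-powerful iff it contains a pair of SSSD walks. -/
def NonPowerful {n : ℕ} (S : Fin n → Fin n → ℤ) : Prop :=
  ∃ u v l, HasSSSD S u v l

/-- `exp_D(X)`: the least `p` such that every vertex is reachable from some vertex
of `X` by a walk of length exactly `p`. -/
noncomputable def setExp {n : ℕ} (A : Fin n → Fin n → Prop) (X : Finset (Fin n)) : ℕ :=
  sInf {p | ∀ v, ∃ x ∈ X, HasWalk A x v p}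

/-- `F(D,k)`: the `k`th upper multiexponent. -/
noncomputable def upperMultiexp {n : ℕ} (A : Fin n → Fin n → Prop) (k : ℕ) : ℕ :=
  sSup {e | ∃ X : Finset (Fin n), X.card = k ∧ setExp A X = e}

/-- `l_S(X)`: the least `p` such that every vertex admits a pair of SSSD walks of
length `p` from some vertex of `X`. -/
noncomputable def setBase {n : ℕ} (S : Fin n → Fin n → ℤ) (X : Finset (Fin n)) : ℕ :=
  sInf {p | ∀ v, ∃ x ∈ X, HasSSSD S x v p}

/-- `L(S,k)`: the `k`th upper base. -/
noncomputable def upperBase {n : ℕ} (S : Fin n → Fin n → ℤ) (k : ℕ) : ℕ :=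
  sSup {e | ∃ X : Finset (Fin n), X.card = k ∧ setBase S X = e}

/-- Distance from `u` to `v` in the digraph `A`. -/
noncomputable def ddist {n : ℕ} (A : Fin n → Fin n → Prop) (u v : Fin n) : ℕ :=
  sInf {l | HasWalk A u v l}

/-- Diameter of the digraph `A`. -/
noncomputable def diam {n : ℕ} (A : Fin n → Fin n → Prop) : ℕ :=
  sSup {d | ∃ u v : Fin n, ddist A u v = d}

/-- `f` is the vertex sequence of a cycle of length `p` in `A`: a closed walk of
length `p` whose first `p` vertices are pairwise distinct. -/
def IsCycleSeq {n : ℕ} (A : Fin n → Fin n → Prop) (f : ℕ → Fin n) (p : ℕ) : Prop :=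
  0 < p ∧ f p = f 0 ∧ (∀ i < p, A (f i) (f (i + 1))) ∧
    ∀ i < p, ∀ j < p, f i = f j → i = j

/-- The digraph `D₁` on `{1,…,n}` (vertex `i` is index `i-1`): the Hamiltonian cycle
`1→2→⋯→n→1` together with the extra arc `(n-1)→1`. -/
def D1 (n : ℕ) : Fin n → Fin n → Prop := fun u v =>
  (v.val = u.val + 1) ∨ (u.val = n - 1 ∧ v.val = 0) ∨ (u.val = n - 2 ∧ v.val = 0)

/-- The digraph `D₂`: `D₁` together with the extra arc `(n)→2`. -/
def D2 (n : ℕ) : Fin n → Fin n → Prop := fun u v =>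
  D1 n u v ∨ (u.val = n - 1 ∧ v.val = 1)

/-- Isomorphism of digraphs on the same vertex set `Fin n`. -/
def DigraphIso {n : ℕ} (A B : Fin n → Fin n → Prop) : Prop :=
  ∃ e : Fin n ≃ Fin n, ∀ u v, A u v ↔ B (e u) (e v)

/-! Let `R_t(v)` be the set of vertices with a walk of length `t` to `v`; it suffices that
`R_t(v)` has more than `n - k` elements for `t = (n - k)(n - 1) + 1`, as it then meets every
`k`-set. A primitive digraph on `n ≥ 2` vertices has a cycle of some length `s < n`, since otherwise
every closed walk would have length divisible by `n`. Every vertex `v` is reached from a vertex `u`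
of that cycle within `n - s` steps, and each turn around the cycle strictly enlarges `R_t(u)` until
it is everything; `m` turns therefore give `m + 1` vertices in `R_t(v)` for
`t ≥ (n - s) + m s`, and this is at most `m (n - 1) + 1`. -/

open Finset

section Walks

variable {n : ℕ} {A : Fin n → Fin n → Prop} {u v w : Fin n}

lemma hasWalk_zero (u : Fin n) : HasWalk A u u 0 :=
  ⟨fun _ => u, rfl, rfl, fun _ h => absurd h (Nat.not_lt_zero _)⟩

lemma hasWalk_one_iff : HasWalk A u v 1 ↔ A u v := by
  constructor
  · rintro ⟨f, rfl, rfl, hf⟩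
    exact hf 0 one_pos
  · intro h
    refine ⟨fun i => if i = 0 then u else v, rfl, rfl, fun i hi => ?_⟩
    obtain rfl : i = 0 := by omega
    simpa using h

lemma hasWalk_of_seq {f : ℕ → Fin n} {l i d : ℕ} (hf : ∀ j < l, A (f j) (f (j + 1)))
    (h : i + d ≤ l) : HasWalk A (f i) (f (i + d)) d :=
  ⟨fun j => f (i + j), rfl, rfl, fun j hj => by simpa [Nat.add_assoc] using hf (i + j) (by omega)⟩

lemma hasWalk_add {p q : ℕ} : HasWalk A u w (p + q) ↔ ∃ v, HasWalk A u v p ∧ HasWalk A v w q := by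
  constructor
  · rintro ⟨f, rfl, rfl, hf⟩
    exact ⟨f p, ⟨f, rfl, rfl, fun i hi => hf i (by omega)⟩, hasWalk_of_seq hf le_rfl⟩
  · rintro ⟨v, ⟨f, hf0, hfp, hf⟩, ⟨g, hg0, hgq, hg⟩⟩
    refine ⟨fun i => if i ≤ p then f i else g (i - p), by simp [hf0], ?_, fun i hi => ?_⟩
    · rcases Nat.eq_zero_or_pos q with rfl | hq
      · simp [hfp, ← hg0, hgq]
      · simp [show ¬p + q ≤ p by omega, hgq]
    · rcases Nat.lt_trichotomy i p with hip | rfl | hip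
      · simpa [hip.le, show i + 1 ≤ p by omega] using hf i hip
      · simpa [hfp, ← hg0] using hg 0 (by omega)
      · simpa [show ¬i ≤ p by omega, show ¬i + 1 ≤ p by omega, Nat.sub_add_comm hip.le]
          using hg (i - p) (by omega)

end Walks

namespace Primitive

variable {n : ℕ} {A : Fin n → Fin n → Prop}

lemma eventually_hasWalk (hp : Primitive A) : ∃ p, ∀ t ≥ p, ∀ u v, HasWalk A u v t := by
  obtain ⟨p, hp0, hp⟩ := hp
  refine ⟨p, fun t ht => ?_⟩
  induction t, ht using Nat.le_induction with
  | base => exact hp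
  | succ t _ ih =>
    intro u v
    obtain ⟨z, -, hzv⟩ := hasWalk_add.1 ((Nat.sub_add_cancel hp0).symm ▸ hp v v :
      HasWalk A v v (p - 1 + 1))
    exact hasWalk_add.2 ⟨z, ih u z, hzv⟩

lemma exists_hasWalk_to (hp : Primitive A) (v : Fin n) (t : ℕ) : ∃ u, HasWalk A u v t := by
  obtain ⟨p, hp⟩ := hp.eventually_hasWalk
  obtain ⟨u, -, hu⟩ := hasWalk_add.1 (hp (p + t) (by omega) v v)
  exact ⟨u, hu⟩

end Primitive

lemma Finset.min_card_add_le_card_of_orbit {α : Type*} [Fintype α] {S : ℕ → Finset α}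
    {F : Finset α → Finset α} (hS : ∀ j, S (j + 1) = F (S j)) (hmono : ∀ j, S j ⊆ S (j + 1))
    {N : ℕ} (hN : S N = univ) (j : ℕ) : min (Fintype.card α) (#(S 0) + j) ≤ #(S j) := by
  induction j with
  | zero => exact min_le_right _ _
  | succ j ih =>
    by_cases hfix : S (j + 1) = S j
    · -- a fixed point of `F` is never left, so it already contains `S N = univ`
      have hconst : ∀ i, S (j + i) = S j := by
        intro i
        induction i with
        | zero => rfl
        | succ i ihi => rw [← Nat.add_assoc, hS, ihi, ← hS, hfix]
      have huniv : S j = univ := by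
        refine univ_subset_iff.1 (hN ▸ ?_)
        rcases le_total N j with hNj | hjN
        · exact monotone_nat_of_le_succ hmono hNj
        · rw [← hconst (N - j), Nat.add_sub_cancel' hjN]
      rw [hfix, huniv, card_univ]
      exact min_le_left _ _
    · have hlt := card_lt_card (ssubset_of_subset_of_ne (hmono j) (Ne.symm hfix))
      have hle := card_le_univ (S (j + 1))
      omega

section ReachingSet

variable {n : ℕ} {A : Fin n → Fin n → Prop} {u v x : Fin n}

open Classical in
noncomputable def reachingSet (A : Fin n → Fin n → Prop) (v : Fin n) (t : ℕ) : Finset (Fin n) :=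
  univ.filter (HasWalk A · v t)

lemma mem_reachingSet {t : ℕ} : x ∈ reachingSet A v t ↔ HasWalk A x v t := by
  simp [reachingSet]

lemma reachingSet_subset_of_hasWalk {d : ℕ} (h : HasWalk A u v d) (t : ℕ) :
    reachingSet A u t ⊆ reachingSet A v (t + d) :=
  fun _ hx => mem_reachingSet.2 (hasWalk_add.2 ⟨u, mem_reachingSet.1 hx, h⟩)

lemma Primitive.min_le_card_reachingSet (hp : Primitive A) {s : ℕ} (hs : 0 < s)
    (hu : HasWalk A u u s) (b j : ℕ) : min n (j + 1) ≤ #(reachingSet A u (b + j * s)) := by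
  classical
  have hS : ∀ j, reachingSet A u (b + (j + 1) * s) =
      univ.filter (fun x => ∃ z ∈ reachingSet A u (b + j * s), HasWalk A x z s) := by
    intro j
    ext x
    simp only [mem_filter, mem_univ, true_and, mem_reachingSet,
      show b + (j + 1) * s = s + (b + j * s) by ring, hasWalk_add]
    exact ⟨fun ⟨z, hxz, hzu⟩ => ⟨z, hzu, hxz⟩, fun ⟨z, hzu, hxz⟩ => ⟨z, hxz, hzu⟩⟩
  have hmono : ∀ j, reachingSet A u (b + j * s) ⊆ reachingSet A u (b + (j + 1) * s) := fun j =>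
    (show b + j * s + s = b + (j + 1) * s by ring) ▸ reachingSet_subset_of_hasWalk hu _
  obtain ⟨p, hp'⟩ := hp.eventually_hasWalk
  have huniv : reachingSet A u (b + p * s) = univ :=
    eq_univ_of_forall fun x => mem_reachingSet.2 (hp' _ (by nlinarith) x u)
  obtain ⟨x, hx⟩ := hp.exists_hasWalk_to u (b + 0 * s)
  have hpos : 0 < #(reachingSet A u (b + 0 * s)) := card_pos.2 ⟨x, mem_reachingSet.2 hx⟩
  have := min_card_add_le_card_of_orbit (S := fun j => reachingSet A u (b + j * s))
    (F := fun T => univ.filter (fun x => ∃ z ∈ T, HasWalk A x z s)) hS hmono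
    huniv j
  simp only [Fintype.card_fin] at this
  omega

end ReachingSet

section Cycles

variable {n : ℕ} {A : Fin n → Fin n → Prop} {u : Fin n}

lemma IsCycleSeq.hasWalk {g : ℕ → Fin n} {s i : ℕ} (hg : IsCycleSeq A g s) (hi : i < s) :
    HasWalk A (g i) (g i) s := by
  obtain ⟨-, hgs, hg, -⟩ := hg
  have htail := hasWalk_of_seq hg (i := i) (d := s - i) (by omega)
  have hhead := hasWalk_of_seq hg (i := 0) (d := i) (by omega)
  rw [Nat.add_sub_cancel' hi.le, hgs] at htail
  rw [Nat.zero_add] at hhead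
  simpa [Nat.sub_add_cancel hi.le] using hasWalk_add.2 ⟨_, htail, hhead⟩

lemma IsCycleSeq.card_image_range {g : ℕ → Fin n} {s : ℕ} (hg : IsCycleSeq A g s) :
    #((range s).image g) = s := by
  rw [card_image_of_injOn fun i hi j hj => hg.2.2.2 i (by simpa using hi) j (by simpa using hj),
    card_range]

/-- Cutting a closed walk at repeated vertices splits it into cycles, each either of length
`< n` or Hamiltonian. -/
lemma exists_cycle_or_dvd_of_hasWalk {l : ℕ} (hl : 0 < l) (h : HasWalk A u u l) :
    (∃ g s, s < n ∧ IsCycleSeq A g s) ∨ n ∣ l := by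
  induction l using Nat.strong_induction_on generalizing u with
  | _ l ih =>
  obtain ⟨f, hf0, hfl, hf⟩ := h
  by_cases hinj : ∀ i < l, ∀ j < l, f i = f j → i = j
  · have hln : l ≤ n := by
      simpa using card_le_card_of_injOn f (s := range l) (t := univ) (fun _ _ => mem_univ _)
        fun i hi j hj => hinj i (by simpa using hi) j (by simpa using hj)
    rcases hln.lt_or_eq with hlt | rfl
    · exact Or.inl ⟨f, l, hlt, hl, hfl.trans hf0.symm, hf, hinj⟩
    · exact Or.inr dvd_rfl
  obtain ⟨i, j, hij, hjl, hfij⟩ : ∃ i j, i < j ∧ j < l ∧ f i = f j := by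
    push Not at hinj
    obtain ⟨i, hi, j, hj, hfij, hne⟩ := hinj
    rcases hne.lt_or_gt with h | h
    · exact ⟨i, j, h, hj, hfij⟩
    · exact ⟨j, i, h, hi, hfij.symm⟩
  have hloop : HasWalk A (f i) (f i) (j - i) := by
    have := hasWalk_of_seq hf (i := i) (d := j - i) (by omega)
    rwa [Nat.add_sub_cancel' hij.le, ← hfij] at this
  have hrest : HasWalk A u u (i + (l - j)) := by
    have hhead := hasWalk_of_seq hf (i := 0) (d := i) (by omega)
    have htail := hasWalk_of_seq hf (i := j) (d := l - j) (by omega)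
    rw [Nat.zero_add, hf0] at hhead
    rw [Nat.add_sub_cancel' hjl.le, hfl, ← hfij] at htail
    exact hasWalk_add.2 ⟨_, hhead, htail⟩
  rcases ih _ (by omega) (by omega) hloop with hc | hdvd₁
  · exact Or.inl hc
  rcases ih _ (by omega) (by omega) hrest with hc | hdvd₂
  · exact Or.inl hc
  exact Or.inr (show j - i + (i + (l - j)) = l by omega ▸ dvd_add hdvd₁ hdvd₂)

/-- Closed walks of the coprime lengths `p + 1` and `p + 2` cannot both have length divisible
by `n ≥ 2`. -/
lemma Primitive.exists_cycle_lt (hp : Primitive A) (hn : 2 ≤ n) :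
    ∃ g s, s < n ∧ IsCycleSeq A g s := by
  obtain ⟨p, hp⟩ := hp.eventually_hasWalk
  let u : Fin n := ⟨0, by omega⟩
  rcases exists_cycle_or_dvd_of_hasWalk p.succ_pos (hp (p + 1) (by omega) u u) with hc | hdvd₁
  · exact hc
  rcases exists_cycle_or_dvd_of_hasWalk (p + 1).succ_pos (hp (p + 1 + 1) (by omega) u u)
    with hc | hdvd₂
  · exact hc
  have := Nat.dvd_one.1 ((Nat.dvd_add_right hdvd₁).1 hdvd₂)
  omega

/-- The vertices within distance `j` of `C` grow strictly with `j` until they exhaust `Fin n`. -/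
lemma Primitive.exists_hasWalk_le_of_mem (hp : Primitive A) {C : Finset (Fin n)}
    (hC : C.Nonempty) (w : Fin n) : ∃ c ∈ C, ∃ d ≤ n - #C, HasWalk A c w d := by
  classical
  set S : ℕ → Finset (Fin n) := fun j => univ.filter fun x => ∃ c ∈ C, ∃ d ≤ j, HasWalk A c x d
  have hS : ∀ j, S (j + 1) = S 0 ∪ univ.filter fun x => ∃ z ∈ S j, A z x := by
    intro j
    ext x
    simp only [S, mem_union, mem_filter, mem_univ, true_and]
    constructor
    · rintro ⟨c, hc, _ | d, hd, hcx⟩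
      · exact Or.inl ⟨c, hc, 0, le_rfl, hcx⟩
      · obtain ⟨z, hcz, hzx⟩ := hasWalk_add.1 hcx
        exact Or.inr ⟨z, ⟨c, hc, d, by omega, hcz⟩, hasWalk_one_iff.1 hzx⟩
    · rintro (⟨c, hc, d, hd, hcx⟩ | ⟨z, ⟨c, hc, d, hd, hcz⟩, hzx⟩)
      · exact ⟨c, hc, d, by omega, hcx⟩
      · exact ⟨c, hc, d + 1, by omega, hasWalk_add.2 ⟨z, hcz, hasWalk_one_iff.2 hzx⟩⟩
  have hmono : ∀ j, S j ⊆ S (j + 1) := by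
    intro j x hx
    simp only [S, mem_filter, mem_univ, true_and] at hx ⊢
    obtain ⟨c, hc, d, hd, hcx⟩ := hx
    exact ⟨c, hc, d, by omega, hcx⟩
  obtain ⟨p, hp'⟩ := hp.eventually_hasWalk
  obtain ⟨c₀, hc₀⟩ := hC
  have huniv : S p = univ := eq_univ_of_forall fun x => by
    simpa [S] using ⟨c₀, hc₀, p, le_rfl, hp' p le_rfl c₀ x⟩
  have hCS : C ⊆ S 0 := fun c hc => by simpa [S] using ⟨c, hc, hasWalk_zero c⟩
  have hcard := min_card_add_le_card_of_orbit
    (F := fun T => S 0 ∪ univ.filter fun x => ∃ z ∈ T, A z x) hS hmono huniv (n - #C)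
  have hC_le := card_le_card hCS
  have hC_n := card_le_univ C
  have hS_n := card_le_univ (S (n - #C))
  simp only [Fintype.card_fin] at hcard hC_n hS_n
  have hw : w ∈ S (n - #C) := by
    rw [eq_univ_of_card (S (n - #C)) (by rw [Fintype.card_fin]; omega)]
    exact mem_univ w
  simpa [S] using hw

end Cycles

lemma Primitive.lt_card_reachingSet {n : ℕ} {A : Fin n → Fin n → Prop} (hp : Primitive A)
    {m t : ℕ} (hm : m < n) (ht : m * (n - 1) + 1 ≤ t) (v : Fin n) :
    m < #(reachingSet A v t) := by
  rcases Nat.eq_zero_or_pos m with rfl | hm₀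
  · obtain ⟨x, hx⟩ := hp.exists_hasWalk_to v t
    exact card_pos.2 ⟨x, mem_reachingSet.2 hx⟩
  obtain ⟨g, s, hsn, hg⟩ := hp.exists_cycle_lt (by omega)
  obtain ⟨c, hc, d, hd, hcv⟩ := hp.exists_hasWalk_le_of_mem
    ((nonempty_range_iff.2 hg.1.ne').image g) v
  rw [hg.card_image_range] at hd
  obtain ⟨i, hi, rfl⟩ := mem_image.1 hc
  have hdt : d + m * s ≤ t := by
    obtain ⟨m, rfl⟩ := Nat.exists_eq_add_one.2 hm₀
    have := Nat.mul_le_mul_left m (show s ≤ n - 1 by omega)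
    rw [Nat.add_one_mul] at ht ⊢
    omega
  calc m < min n (m + 1) := by omega
    _ ≤ #(reachingSet A (g i) (t - d - m * s + m * s)) :=
      hp.min_le_card_reachingSet hg.1 (hg.hasWalk (by simpa using hi)) _ m
    _ ≤ #(reachingSet A v (t - d - m * s + m * s + d)) :=
      card_le_card (reachingSet_subset_of_hasWalk hcv _)
    _ = #(reachingSet A v t) := by congr 2; omega

theorem upperMultiexp_le_general {n : ℕ} (D : Fin n → Fin n → Prop) (hprim : Primitive D)
    (k : ℕ) (hk1 : 1 ≤ k) :
    upperMultiexp D k ≤ (n - k) * (n - 1) + 1 := by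
  classical
  refine csSup_le' ?_
  rintro _ ⟨X, hX, rfl⟩
  refine Nat.sInf_le fun v => ?_
  have hcard := hprim.lt_card_reachingSet (m := n - k) (by have := v.pos; omega) le_rfl v
  obtain ⟨x, hx⟩ := inter_nonempty_of_card_lt_card_add_card
    (subset_univ (reachingSet D v ((n - k) * (n - 1) + 1))) (subset_univ X)
    (by rw [card_univ, Fintype.card_fin]; omega)
  exact ⟨x, (mem_inter.1 hx).2, mem_reachingSet.1 (mem_inter.1 hx).1⟩

/-- Lemma 2.2: `F(D,k) ≤ (n-k)(n-1) + 1` for a primitive digraph of order `n`. -/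
theorem upperMultiexp_le {n : ℕ} (D : Fin n → Fin n → Prop) (hprim : Primitive D)
    (k : ℕ) (hk1 : 1 ≤ k) (hkn : k ≤ n) :
    upperMultiexp D k ≤ (n - k) * (n - 1) + 1 :=
  upperMultiexp_le_general D hprim k hk1
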